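/- With notation as before (α(X,Y) = Σ_i ⟨X^i, Y^i⟩ η_i on V = E₁ ⊕ ⋯ ⊕ E_k orthogonal with each E_i nonzero, n = dim V, H = (1/n)Σ_j α(X_j, X_j), Ric(X,Y) = c(n−1)⟨X,Y⟩ + n⟨α(X,Y), H⟩ − Σ_j ⟨α(X,X_j), α(Y,X_j)⟩), the condition Ric = λ·⟨·,·⟩ holds if and only if c(n−1) − λ = ‖η_i‖² − n⟨H, η_i⟩ for every i = 1, …, k. -/

import Mathlib

open scoped RealInnerProductSpace

/-- Pointwise algebraic characterization of the Einstein condition for a submanifold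
with flat normal bundle: `Ric = λ⟪·,·⟫` iff `c(n−1) − λ = ‖η_i‖² − n⟪H, η_i⟫` for all i. -/
theorem stmt4 {V W : Type*} [NormedAddCommGroup V] [InnerProductSpace ℝ V]
    [FiniteDimensional ℝ V] [NormedAddCommGroup W] [InnerProductSpace ℝ W]
    {k : ℕ} (E : Fin k → Submodule ℝ V)
    (hne : ∀ i, E i ≠ ⊥)
    (hortho : ∀ i j, i ≠ j → ∀ x ∈ E i, ∀ y ∈ E j, ⟪x, y⟫ = 0)
    (hsup : (⨆ i, E i) = ⊤)
    (η : Fin k → W) (hinj : Function.Injective η) (c lam : ℝ)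
    {n : ℕ} (b : OrthonormalBasis (Fin n) ℝ V)
    (α : V → V → W)
    (hα : ∀ X Y, α X Y = ∑ i, ⟪(Submodule.orthogonalProjection (E i) X : V),
      (Submodule.orthogonalProjection (E i) Y : V)⟫ • η i)
    (H : W) (hH : H = (n : ℝ)⁻¹ • ∑ j, α (b j) (b j))
    (Ric : V → V → ℝ)
    (hRic : ∀ X Y, Ric X Y = c * (n - 1) * ⟪X, Y⟫ + n * ⟪α X Y, H⟫ -
      ∑ j, ⟪α X (b j), α Y (b j)⟫) :
    (∀ X Y, Ric X Y = lam * ⟪X, Y⟫) ↔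
      (∀ i, c * (n - 1) - lam = ‖η i‖ ^ 2 - n * ⟪H, η i⟫) := by
  classical
  -- self-adjointness of projections
  have hself : ∀ i (X Y : V), ⟪(Submodule.orthogonalProjection (E i) X : V), Y⟫ =
      ⟪(Submodule.orthogonalProjection (E i) X : V), (Submodule.orthogonalProjection (E i) Y : V)⟫ := by
    intro i X Y
    rw [← Submodule.coe_inner, Submodule.inner_orthogonalProjection_eq_of_mem_left]
  have hzero : ∀ i j, i ≠ j → ∀ X Y : V,
      ⟪(Submodule.orthogonalProjection (E i) X : V), (Submodule.orthogonalProjection (E j) Y : V)⟫ = 0 := by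
    intro i j hij X Y
    exact hortho i j hij _ (Submodule.coe_mem _) _ (Submodule.coe_mem _)
  -- decomposition of the identity
  have hdecomp : ∀ X : V, ∑ i, ((Submodule.orthogonalProjection (E i) X : V)) = X := by
    intro X
    have hX : X ∈ ⨆ i, E i := by rw [hsup]; exact Submodule.mem_top
    refine Submodule.iSup_induction (motive := fun v : V =>
        ∑ i, ((Submodule.orthogonalProjection (E i) v : V)) = v) E hX ?_ ?_ ?_
    · intro j x hx
      rw [Finset.sum_eq_single j]
      · exact Submodule.starProjection_eq_self_iff.mpr hx
      · intro i _ hij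
        have hxo : x ∈ (E i)ᗮ := by
          rw [Submodule.mem_orthogonal]
          intro u hu
          exact hortho i j hij u hu x hx
        rw [Submodule.orthogonalProjectionOnto_apply_of_mem_orthogonal hxo,
          ZeroMemClass.coe_zero]
      · intro h; exact absurd (Finset.mem_univ j) h
    · simp
    · intro x y hx hy
      simp only [map_add, Submodule.coe_add, Finset.sum_add_distrib, hx, hy]
  -- decomposition of the inner product
  have hinner : ∀ X Y : V, ⟪X, Y⟫ = ∑ i, ⟪(Submodule.orthogonalProjection (E i) X : V),
      (Submodule.orthogonalProjection (E i) Y : V)⟫ := by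
    intro X Y
    conv_lhs => rw [← hdecomp Y, inner_sum]
    refine Finset.sum_congr rfl fun i _ => ?_
    calc ⟪X, (Submodule.orthogonalProjection (E i) Y : V)⟫
        = ⟪(Submodule.orthogonalProjection (E i) Y : V), X⟫ := real_inner_comm _ _
      _ = ⟪(Submodule.orthogonalProjection (E i) Y : V), (Submodule.orthogonalProjection (E i) X : V)⟫ :=
          hself i Y X
      _ = _ := real_inner_comm _ _
  -- trace sum
  have hsumj : ∀ X Y : V, ∑ j, ⟪α X (b j), α Y (b j)⟫ =
      ∑ i, ⟪(Submodule.orthogonalProjection (E i) X : V), (Submodule.orthogonalProjection (E i) Y : V)⟫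
        * ‖η i‖ ^ 2 := by
    intro X Y
    have step : ∀ j, ⟪α X (b j), α Y (b j)⟫ =
        ∑ i, ∑ i', (⟪(Submodule.orthogonalProjection (E i) X : V), b j⟫ *
          ⟪(Submodule.orthogonalProjection (E i') Y : V), b j⟫) * ⟪η i, η i'⟫ := by
      intro j
      rw [hα, hα, sum_inner]
      refine Finset.sum_congr rfl fun i _ => ?_
      rw [real_inner_smul_left, inner_sum, Finset.mul_sum]
      refine Finset.sum_congr rfl fun i' _ => ?_
      rw [real_inner_smul_right, ← hself i X (b j), ← hself i' Y (b j)]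
      ring
    simp only [step]
    rw [Finset.sum_comm]
    refine Finset.sum_congr rfl fun i _ => ?_
    rw [Finset.sum_comm]
    have collapse : ∀ i', (∑ j, (⟪(Submodule.orthogonalProjection (E i) X : V), b j⟫ *
        ⟪(Submodule.orthogonalProjection (E i') Y : V), b j⟫) * ⟪η i, η i'⟫) =
        ⟪(Submodule.orthogonalProjection (E i) X : V), (Submodule.orthogonalProjection (E i') Y : V)⟫
          * ⟪η i, η i'⟫ := by
      intro i'
      rw [← Finset.sum_mul]
      congr 1
      have := b.sum_inner_mul_inner (Submodule.orthogonalProjection (E i) X : V)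
        (Submodule.orthogonalProjection (E i') Y : V)
      rw [← this]
      refine Finset.sum_congr rfl fun j _ => ?_
      rw [real_inner_comm (b j) ((Submodule.orthogonalProjection (E i') Y : V))]
    simp only [collapse]
    rw [Finset.sum_eq_single i]
    · rw [real_inner_self_eq_norm_sq]
    · intro i' _ hi'
      rw [hzero i i' (Ne.symm hi'), zero_mul]
    · intro h; exact absurd (Finset.mem_univ i) h
  -- mean curvature pairing
  have hαH : ∀ X Y : V, ⟪α X Y, H⟫ =
      ∑ i, ⟪(Submodule.orthogonalProjection (E i) X : V), (Submodule.orthogonalProjection (E i) Y : V)⟫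
        * ⟪H, η i⟫ := by
    intro X Y
    rw [hα, sum_inner]
    refine Finset.sum_congr rfl fun i _ => ?_
    rw [real_inner_smul_left, real_inner_comm (η i) H]
  -- key identity
  have key : ∀ X Y : V, Ric X Y - lam * ⟪X, Y⟫ =
      ∑ i, ⟪(Submodule.orthogonalProjection (E i) X : V), (Submodule.orthogonalProjection (E i) Y : V)⟫
        * (c * (n - 1) - lam + n * ⟪H, η i⟫ - ‖η i‖ ^ 2) := by
    intro X Y
    rw [hRic, hsumj, hαH, hinner X Y, Finset.mul_sum, Finset.mul_sum, Finset.mul_sum,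
      ← Finset.sum_add_distrib, ← Finset.sum_sub_distrib, ← Finset.sum_sub_distrib]
    exact Finset.sum_congr rfl fun i _ => by ring
  constructor
  · intro hR i
    obtain ⟨x, hx, hx0⟩ := (Submodule.ne_bot_iff (E i)).mp (hne i)
    have h1 : (Submodule.orthogonalProjection (E i) x : V) = x := Submodule.starProjection_eq_self_iff.mpr hx
    have hs : (0 : ℝ) = ∑ i', ⟪(Submodule.orthogonalProjection (E i') x : V),
        (Submodule.orthogonalProjection (E i') x : V)⟫
        * (c * (n - 1) - lam + n * ⟪H, η i'⟫ - ‖η i'‖ ^ 2) := by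
      rw [← key x x, hR x x]; ring
    rw [Finset.sum_eq_single i] at hs
    · rw [h1, real_inner_self_eq_norm_sq] at hs
      have hx2 : ‖x‖ ^ 2 ≠ 0 := pow_ne_zero _ (norm_ne_zero_iff.mpr hx0)
      have : c * (n - 1) - lam + n * ⟪H, η i⟫ - ‖η i‖ ^ 2 = 0 := by
        rcases mul_eq_zero.mp hs.symm with h | h
        · exact absurd h hx2
        · exact h
      linarith
    · intro i' _ hi'
      have hxo : x ∈ (E i')ᗮ := by
        rw [Submodule.mem_orthogonal]
        intro u hu
        exact hortho i' i hi' u hu x hx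
      rw [Submodule.orthogonalProjectionOnto_apply_of_mem_orthogonal hxo,
        ZeroMemClass.coe_zero, inner_zero_left, zero_mul]
    · intro h; exact absurd (Finset.mem_univ i) h
  · intro h X Y
    have hz : Ric X Y - lam * ⟪X, Y⟫ = 0 := by
      rw [key X Y]
      refine Finset.sum_eq_zero fun i _ => ?_
      rw [show c * (n - 1) - lam + n * ⟪H, η i⟫ - ‖η i‖ ^ 2 = 0 from by
        have := h i; linarith, mul_zero]
    linarith
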